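/- Let R̂ be the 4×4 matrix with rows (1, h₁, h₂, h₃), (0, 0, 1, h₁), (0, 1, 0, h₂), (0, 0, 0, 1) over a field of characteristic 0. Then (R̂ - I)³(R̂ + I) = 0. Moreover, if h₁ + h₂ ≠ 0, then (R̂ - I)²(R̂ + I) ≠ 0. -/

import Mathlib

/-!
Write `N = R̂ - 1`. A direct computation gives `N² (R̂ + 1) = (h₁ + h₂)² E₀₃`, where `E₀₃` is the
matrix unit in the corner. The first column of `N` vanishes, so `N E₀₃ = 0`, whence
`N³ (R̂ + 1) = 0`, while the corner entry `(h₁ + h₂)²` of `N² (R̂ + 1)` is nonzero when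
`h₁ + h₂ ≠ 0`.
-/

open Matrix

theorem Matrix.mul_single_eq_zero_of_col_eq_zero {l m n α : Type*} [DecidableEq m]
    [DecidableEq n] [Fintype m] [NonUnitalNonAssocSemiring α] {M : Matrix l m α} {i : m}
    (hM : ∀ a, M a i = 0) (j : n) (c : α) : M * single i j c = 0 := by
  ext a b
  by_cases hb : b = j
  · subst hb
    simp [hM]
  · exact mul_single_apply_of_ne i j a b (c := c) hb M

section HietarintaH23

variable {R : Type*} [CommRing R]

def braidedHietarintaH23 (h₁ h₂ h₃ : R) : Matrix (Fin 4) (Fin 4) R :=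
  !![1, h₁, h₂, h₃; 0, 0, 1, h₁; 0, 1, 0, h₂; 0, 0, 0, 1]

theorem braidedHietarintaH23_sub_one_sq_mul_add_one (h₁ h₂ h₃ : R) :
    (braidedHietarintaH23 h₁ h₂ h₃ - 1) ^ 2 * (braidedHietarintaH23 h₁ h₂ h₃ + 1) =
      (h₁ + h₂) ^ 2 • single 0 3 1 := by
  ext i j
  fin_cases i <;> fin_cases j <;>
    simp [braidedHietarintaH23, sq, mul_apply, Fin.sum_univ_four, one_apply] <;>
    ring

theorem braidedHietarintaH23_sub_one_mul_single (h₁ h₂ h₃ : R) (j : Fin 4) (c : R) :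
    (braidedHietarintaH23 h₁ h₂ h₃ - 1) * single 0 j c = 0 :=
  mul_single_eq_zero_of_col_eq_zero (fun a => by
    fin_cases a <;> simp [braidedHietarintaH23, one_apply]) j c

end HietarintaH23

theorem stmt2_general (K : Type*) [Field K] (h₁ h₂ h₃ : K)
    (Rhat : Matrix (Fin 4) (Fin 4) K)
    (hR : Rhat = !![1, h₁, h₂, h₃; 0, 0, 1, h₁; 0, 1, 0, h₂; 0, 0, 0, 1]) :
    (Rhat - 1) ^ 3 * (Rhat + 1) = 0 ∧
      (h₁ + h₂ ≠ 0 → (Rhat - 1) ^ 2 * (Rhat + 1) ≠ 0) := by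
  replace hR : Rhat = braidedHietarintaH23 h₁ h₂ h₃ := hR
  subst hR
  have hN := braidedHietarintaH23_sub_one_sq_mul_add_one h₁ h₂ h₃
  refine ⟨?_, fun hs hzero => hs ?_⟩
  · rw [pow_succ', mul_assoc, hN, Matrix.mul_smul, braidedHietarintaH23_sub_one_mul_single,
      smul_zero]
  · have corner := congrFun (congrFun (hN.symm.trans hzero) 0) 3
    simpa using corner

theorem stmt2 (K : Type*) [Field K] [CharZero K] (h₁ h₂ h₃ : K)
    (Rhat : Matrix (Fin 4) (Fin 4) K)
    (hR : Rhat = !![1, h₁, h₂, h₃; 0, 0, 1, h₁; 0, 1, 0, h₂; 0, 0, 0, 1]) :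
    (Rhat - 1) ^ 3 * (Rhat + 1) = 0 ∧
      (h₁ + h₂ ≠ 0 → (Rhat - 1) ^ 2 * (Rhat + 1) ≠ 0) :=
  stmt2_general K h₁ h₂ h₃ Rhat hR
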